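/- arXiv:2205.11662 — 2 statements merged into one kernel-verified Lean document; each statement's English description precedes it below -/
import Mathlib

section
/- Let G be a group, {H_λ}_{λ∈Λ} a collection of subgroups of G, and X a symmetric relative generating set of G with respect to {H_λ}_{λ∈Λ} with 1 ∈ X, and suppose {H_λ}_{λ∈Λ} is hyperbolically embedded in G with respect to X. Then any exponential equation a_1 g_1^{x_1} a_2 g_2^{x_2} ... a_n g_n^{x_n} = 1 with arbitrary coefficients a_i ∈ G and g_i ∈ H_{λ(i)} for some λ(i) ∈ Λ (i = 1, ..., n) is equivalent to a finite disjunction Φ = ⋁_{i=1}^{k} ⋀_{j=1}^{s_i} L_{i,j} of finite conjunctions of exponential equations, such that in each conjunction the equations are pairwise independent and each L_{i,j} is an exponential equation over H_λ for some λ ∈ Λ. -/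
/-! Common definitions for formalizing "Exponential equations in acylindrically
hyperbolic groups" -/

namespace ExpPaper

/-- An atom of an exponential expression: either a constant coefficient `a ∈ G`,
or a power `g ^ x_i` of a fixed element `g ∈ G`, where `x_i` is the variable
indexed by `i`. -/
inductive Atom (G : Type*) (ι : Type*) where
  | const : G → Atom G ι
  | pow : G → ι → Atom G ι

namespace Atom

variable {G ι : Type*}

/-- Evaluation of an atom at a tuple `k` of integer values of the variables. -/
def eval [Group G] (k : ι → ℤ) : Atom G ι → G
  | const a => a
  | pow g i => g ^ k i

/-- The group element underlying an atom. -/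
def carrier : Atom G ι → G
  | const a => a
  | pow g _ => g

end Atom

/-- An exponential equation over a group `G` with variables indexed by `ι`:
a formal product of coefficients and powers `g^{x_i}`, equated to `1`. -/
structure ExpEq (G : Type*) (ι : Type*) where
  atoms : List (Atom G ι)

namespace ExpEq

variable {G ι : Type*}

/-- A tuple `k : ι → ℤ` is a solution of the exponential equation `E`. -/
def holds [Group G] (E : ExpEq G ι) (k : ι → ℤ) : Prop :=
  (E.atoms.map (Atom.eval k)).prod = 1

/-- The set of variables occurring in an exponential equation. -/
def vars (E : ExpEq G ι) : Set ι := {i | ∃ g, Atom.pow g i ∈ E.atoms}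

/-- Two exponential equations are independent if their sets of variables are disjoint. -/
def Indep (E F : ExpEq G ι) : Prop := Disjoint E.vars F.vars

/-- An exponential equation is over a subset `A ⊆ G` if all its coefficients and
all bases of its powers lie in `A`. -/
def isOver (E : ExpEq G ι) (A : Set G) : Prop := ∀ t ∈ E.atoms, t.carrier ∈ A

/-- All bases `g` of powers `g^{x_i}` occurring in `E` satisfy the predicate `P`
(used for "elliptic" and "loxodromic" equations). -/
def basesIn (E : ExpEq G ι) (P : G → Prop) : Prop :=
  ∀ g i, Atom.pow g i ∈ E.atoms → P g

/-- A finitary exponential equation: one of the form `a * g ^ x = 1` with `g` of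
finite order. -/
def Finitary [Group G] (E : ExpEq G ι) : Prop :=
  ∃ (a g : G) (i : ι), E.atoms = [Atom.const a, Atom.pow g i] ∧ IsOfFinOrder g

end ExpEq

/-- The solution set in `ℤ^n` of the standard exponential equation
`a 1 * g 1 ^ x 1 * ... * a n * g n ^ x n = 1`. -/
def stdSolZ {G : Type*} [Group G] {n : ℕ} (a g : Fin n → G) : Set (Fin n → ℤ) :=
  {k | (List.ofFn fun i => a i * g i ^ k i).prod = 1}

/-- The set of `ℕ`-solutions of the standard exponential equation. -/
def stdSolN {G : Type*} [Group G] {n : ℕ} (a g : Fin n → G) : Set (Fin n → ℕ) :=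
  {k | (List.ofFn fun i => a i * g i ^ k i).prod = 1}

/-- `k` satisfies the disjunction of the finite systems (conjunctions) collected in `Φ`. -/
def SatDisj {G ι : Type*} [Group G] (Φ : List (List (ExpEq G ι))) (k : ι → ℤ) : Prop :=
  ∃ sys ∈ Φ, ∀ E ∈ sys, E.holds k

section Action

variable {G α : Type*} [Group G] [MulAction G α]

/-- `g` is elliptic with respect to the action of `G` on a space with distance
function `d`: some orbit of `⟨g⟩` is bounded. -/
def EllipticWith (d : α → α → ℝ) (g : G) : Prop :=
  ∃ x : α, ∃ B : ℝ, ∀ n : ℤ, d x (g ^ n • x) ≤ B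

/-- `g` is loxodromic with respect to the action of `G` on a space with distance
function `d`: some orbit map `n ↦ g ^ n • x` is a quasi-isometric embedding of `ℤ`. -/
def LoxodromicWith (d : α → α → ℝ) (g : G) : Prop :=
  ∃ x : α, ∃ κ ε : ℝ, 1 ≤ κ ∧ 0 ≤ ε ∧
    ∀ m n : ℤ, ((|m - n| : ℤ) : ℝ) / κ - ε ≤ d (g ^ m • x) (g ^ n • x)

/-- The action of `G` on a space with distance function `d` is acylindrical. -/
def AcylindricalWith (G : Type*) {α : Type*} [Group G] [MulAction G α]
    (d : α → α → ℝ) : Prop :=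
  ∀ ε : ℝ, 0 < ε → ∃ R : ℝ, 0 < R ∧ ∃ N : ℕ, ∀ x y : α, R ≤ d x y →
    {h : G | d x (h • x) ≤ ε ∧ d y (h • y) ≤ ε}.Finite ∧
    {h : G | d x (h • x) ≤ ε ∧ d y (h • y) ≤ ε}.ncard ≤ N

end Action

/-- The action of `G` on the metric space `α` is by isometries. -/
def IsometricAction (G α : Type*) [Group G] [MulAction G α] [MetricSpace α] : Prop :=
  ∀ g : G, Isometry fun x : α => g • x

/-- `f : ℝ → α` is a geodesic segment from `x` to `y`, parametrized by arclength
on `[0, dist x y]`. -/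
def IsGeodesicSeg {α : Type*} [MetricSpace α] (x y : α) (f : ℝ → α) : Prop :=
  f 0 = x ∧ f (dist x y) = y ∧
    ∀ s ∈ Set.Icc (0 : ℝ) (dist x y), ∀ t ∈ Set.Icc (0 : ℝ) (dist x y),
      dist (f s) (f t) = |s - t|

/-- A geodesic metric space: any two points are joined by a geodesic segment. -/
def GeodesicSpace (α : Type*) [MetricSpace α] : Prop :=
  ∀ x y : α, ∃ f : ℝ → α, IsGeodesicSeg x y f

/-- A metric space is Gromov hyperbolic if for some `δ ≥ 0` every geodesic
triangle is `δ`-thin: each side lies in the `δ`-neighborhood of the union of the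
other two sides. -/
def GromovHyperbolicSpace (α : Type*) [MetricSpace α] : Prop :=
  ∃ δ : ℝ, 0 ≤ δ ∧ ∀ x y z : α, ∀ fxy fyz fxz : ℝ → α,
    IsGeodesicSeg x y fxy → IsGeodesicSeg y z fyz → IsGeodesicSeg x z fxz →
    ∀ s ∈ Set.Icc (0 : ℝ) (dist x y),
      ∃ p ∈ fyz '' Set.Icc (0 : ℝ) (dist y z) ∪ fxz '' Set.Icc (0 : ℝ) (dist x z),
        dist (fxy s) p ≤ δ

/-- The maximal elementary subgroup associated with a loxodromic element `g`,
as a subset of `G`: `E_G(g) = {f | ∃ n > 0, f⁻¹ g^n f = g^{± n}}`. -/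
def EG {G : Type*} [Group G] (g : G) : Set G :=
  {f | ∃ m : ℕ, 0 < m ∧ (f⁻¹ * g ^ m * f = g ^ m ∨ f⁻¹ * g ^ m * f = (g ^ m)⁻¹)}

/-- Word length of `g` with respect to a (symmetric) generating set `X ⊆ G`. -/
noncomputable def wordLen {G : Type*} [Group G] (X : Set G) (g : G) : ℕ :=
  sInf {m | ∃ w : List G, w.length = m ∧ (∀ y ∈ w, y ∈ X) ∧ w.prod = g}

/-- The word metric on (the vertex set of) the Cayley graph `Γ(G, X)`. -/
noncomputable def wordDist {G : Type*} [Group G] (X : Set G) (u v : G) : ℝ :=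
  (wordLen X (u⁻¹ * v) : ℝ)

/-- A distance function is Gromov hyperbolic in the four-point sense:
`(x|y)_w ≥ min ((x|z)_w, (z|y)_w) - δ` for all `x y z w`. -/
def FourPointHyperbolic {α : Type*} (d : α → α → ℝ) : Prop :=
  ∃ δ : ℝ, 0 ≤ δ ∧ ∀ x y z w : α,
    min ((d x w + d z w - d x z) / 2) ((d z w + d y w - d z y) / 2) - δ ≤
      (d x w + d y w - d x y) / 2

/-- A group is virtually cyclic if it contains a cyclic subgroup of finite index. -/
def IsVirtuallyCyclic (G : Type*) [Group G] : Prop :=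
  ∃ C : Subgroup G, IsCyclic ↥C ∧ C.index ≠ 0

/-- A letter of the alphabet `X ⊔ 𝓗`, `𝓗 = ⊔_λ H_λ`, used to label the edges of the
relative Cayley graph `Γ(G, X ⊔ 𝓗)`. -/
inductive RelLetter (G : Type*) {Λ : Type*} [Group G] (X : Set G) (H : Λ → Subgroup G) where
  | ofX (x : G) (hx : x ∈ X) : RelLetter G X H
  | ofH (lam : Λ) (h : G) (hh : h ∈ H lam) : RelLetter G X H

namespace RelLetter

variable {G Λ : Type*} [Group G] {X : Set G} {H : Λ → Subgroup G}

/-- The group element represented by a letter. -/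
def val : RelLetter G X H → G
  | ofX x _ => x
  | ofH _ h _ => h

/-- The index `λ` if the letter comes from the alphabet `H_λ`, and `none` if it
comes from `X`. -/
def lamOf : RelLetter G X H → Option Λ
  | ofX _ _ => none
  | ofH lam _ _ => some lam

end RelLetter

/-- The vertex reached after the first `j` edges of the path starting at `g0`
labelled by the word `w` in the relative Cayley graph. -/
def pathVertex {G Λ : Type*} [Group G] {X : Set G} {H : Λ → Subgroup G}
    (g0 : G) (w : List (RelLetter G X H)) (j : ℕ) : G :=
  g0 * ((w.map RelLetter.val).take j).prod

/-- Word length in the relative Cayley graph `Γ(G, X ⊔ 𝓗)`. -/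
noncomputable def relWordLen {G Λ : Type*} [Group G] (X : Set G) (H : Λ → Subgroup G)
    (g : G) : ℕ :=
  sInf {m | ∃ w : List (RelLetter G X H), w.length = m ∧ (w.map RelLetter.val).prod = g}

/-- The distance function on (the vertex set of) the relative Cayley graph
`Γ(G, X ⊔ 𝓗)`. -/
noncomputable def relDist {G Λ : Type*} [Group G] (X : Set G) (H : Λ → Subgroup G)
    (u v : G) : ℝ :=
  (relWordLen X H (u⁻¹ * v) : ℝ)

/-- The relative metric `d̂_λ` on `H_λ`: the length of a shortest path in
`Γ(G, X ⊔ 𝓗)` from `a` to `b` that has no edges in the complete subgraph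
`Γ(H_λ, H_λ)`, and `∞` if there is no such path. -/
noncomputable def relMetric {G Λ : Type*} [Group G] (X : Set G) (H : Λ → Subgroup G)
    (lam : Λ) (a b : G) : ℕ∞ :=
  sInf {m : ℕ∞ | ∃ w : List (RelLetter G X H),
    (w.map RelLetter.val).prod = a⁻¹ * b ∧
    (∀ j : Fin w.length,
      ¬ ((w.get j).lamOf = some lam ∧ pathVertex a w (j : ℕ) ∈ H lam)) ∧
    m = (w.length : ℕ∞)}

/-- The collection `{H_λ}` is hyperbolically embedded in `G` with respect to `X`:
`X` together with the `H_λ` generates `G`, the relative Cayley graph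
`Γ(G, X ⊔ 𝓗)` is hyperbolic, and each relative metric `d̂_λ` is proper. -/
def IsHypEmbedded {G Λ : Type*} [Group G] (X : Set G) (H : Λ → Subgroup G) : Prop :=
  Subgroup.closure (X ∪ ⋃ lam, (H lam : Set G)) = ⊤ ∧
  FourPointHyperbolic (relDist X H) ∧
  ∀ lam : Λ, ∀ r : ℕ, {h : G | h ∈ H lam ∧ relMetric X H lam 1 h ≤ (r : ℕ∞)}.Finite

/-- `G` is relatively hyperbolic with respect to `{H_λ}` (in the sense of Osin):
`{H_λ}` is hyperbolically embedded in `G` with respect to some finite symmetric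
relative generating set containing `1`. -/
def RelativelyHyperbolic {G Λ : Type*} [Group G] (H : Λ → Subgroup G) : Prop :=
  ∃ X : Set G, X.Finite ∧ X = X⁻¹ ∧ (1 : G) ∈ X ∧ IsHypEmbedded X H

/-- A permutation of `{1, ..., n}` is Catalan if its orbits form a non-crossing
partition. -/
def IsCatalan {n : ℕ} (σ : Equiv.Perm (Fin n)) : Prop :=
  ∀ k l s t : Fin n, σ.SameCycle k l → σ.SameCycle s t →
    k < s → s < l → l < t → σ.SameCycle k s

/-- A `ℤ`-linear subset of `ℤ^ι`: the image of `ℤ^d` under an affine map `z ↦ Az + b`. -/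
def IsZLinear {ι : Type*} (S : Set (ι → ℤ)) : Prop :=
  ∃ (d : ℕ) (A : Matrix ι (Fin d) ℤ) (b : ι → ℤ),
    S = Set.range fun z : Fin d → ℤ => A.mulVec z + b

/-- A `ℤ`-semilinear subset of `ℤ^ι`: a finite union of `ℤ`-linear subsets. -/
def IsZSemilinear {ι : Type*} (S : Set (ι → ℤ)) : Prop :=
  ∃ (m : ℕ) (f : Fin m → Set (ι → ℤ)), (∀ i, IsZLinear (f i)) ∧ S = ⋃ i, f i

/-- A linear subset of `ℕ^ι`: the image of `ℕ^d` under an affine map `z ↦ Az + b`. -/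
def IsNLinear {ι : Type*} (S : Set (ι → ℕ)) : Prop :=
  ∃ (d : ℕ) (A : Matrix ι (Fin d) ℕ) (b : ι → ℕ),
    S = Set.range fun z : Fin d → ℕ => A.mulVec z + b

/-- A semilinear subset of `ℕ^ι`: a finite union of linear subsets. -/
def IsNSemilinear {ι : Type*} (S : Set (ι → ℕ)) : Prop :=
  ∃ (m : ℕ) (f : Fin m → Set (ι → ℕ)), (∀ i, IsNLinear (f i)) ∧ S = ⋃ i, f i

/-- The concatenation `A ⊕ B ⊆ R^{s+t}` of `A ⊆ R^s` and `B ⊆ R^t`. -/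
def concatSet {R : Type*} {s t : ℕ} (A : Set (Fin s → R)) (B : Set (Fin t → R)) :
    Set (Fin (s + t) → R) :=
  {v | (fun i => v (Fin.castAdd t i)) ∈ A ∧ (fun j => v (Fin.natAdd s j)) ∈ B}

/-- Function symbols of the language `⟨+, 0, 1⟩` of (weak) Presburger arithmetic. -/
inductive PresFunc : ℕ → Type
  | zero : PresFunc 0
  | one : PresFunc 0
  | add : PresFunc 2

/-- The first-order language `⟨+, 0, 1⟩` of (weak) Presburger arithmetic. -/
def presLang : FirstOrder.Language :=
  { Functions := PresFunc, Relations := fun _ => Empty }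

/-- The standard interpretation of `⟨+, 0, 1⟩` in `ℤ` (weak Presburger arithmetic). -/
instance : presLang.Structure ℤ where
  funMap {_n} f v :=
    match f with
    | PresFunc.zero => 0
    | PresFunc.one => 1
    | PresFunc.add => v 0 + v 1
  RelMap {_n} r := r.elim

/-- The standard interpretation of `⟨+, 0, 1⟩` in `ℕ` (Presburger arithmetic). -/
instance : presLang.Structure ℕ where
  funMap {_n} f v :=
    match f with
    | PresFunc.zero => 0
    | PresFunc.one => 1
    | PresFunc.add => v 0 + v 1
  RelMap {_n} r := r.elim

end ExpPaper

open ExpPaper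

/-! Spell the equation as a word `w` whose items are letters of `X ⊔ 𝓗` and powers `g ^ x_i`
with `g ∈ H μ`, every variable occurring once; for fixed exponents `w` labels a path from `1` in
`Γ(G, X ⊔ 𝓗)`, a power contributing one edge labelled by `g ^ x_i ∈ H μ`.

By induction on (number of powers, length of `w`), for every `ν` the condition `w ∈ H ν` is a
finite disjunction of peripheral systems, on each of which `w` equals an expression over `H ν`
in the remaining variables. If `w ∈ H ν`, then either some `H ν`-edge of the path starts in
`H ν`, and then the prefix before it and the suffix after it both lie in `H ν` (two shorter
words), or no edge of the path lies in `Γ(H ν, H ν)`, so that `d̂_ν(1, w) ≤ |w|` and `w` lies in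
a finite set by properness of `d̂_ν`. An equation `p g^{x_i} s = c` is the rotated equation
`(s c⁻¹ p) g^{x_i} = 1`, with `c⁻¹` spelled in letters, and `s c⁻¹ p` has one power fewer: on
each of its branches for `H μ` it becomes one more equation over `H μ`. The theorem is the case
`c = 1`. -/

namespace ExpPaper

variable {G Λ ι : Type*}

namespace ExpEq

instance : Mul (ExpEq G ι) := ⟨fun E F => ⟨E.atoms ++ F.atoms⟩⟩

def const (c : G) : ExpEq G ι := ⟨[.const c]⟩

def power (g : G) (i : ι) : ExpEq G ι := ⟨[.pow g i]⟩

variable {E F : ExpEq G ι} {A : Set G}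

@[simp] theorem vars_mul : (E * F).vars = E.vars ∪ F.vars := by
  ext i; simp [vars, HMul.hMul, Mul.mul, exists_or]

@[simp] theorem isOver_mul : (E * F).isOver A ↔ E.isOver A ∧ F.isOver A := by
  simp [isOver, HMul.hMul, Mul.mul, or_imp, forall_and]

@[simp] theorem vars_const (c : G) : (const c : ExpEq G ι).vars = ∅ := by
  ext i; simp [vars, const]

@[simp] theorem isOver_const (c : G) : (const c : ExpEq G ι).isOver A ↔ c ∈ A := by
  simp [isOver, const, Atom.carrier]

@[simp] theorem vars_power (g : G) (i : ι) : (power g i).vars = {i} := by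
  ext j; simp [vars, power, eq_comm]

@[simp] theorem isOver_power (g : G) (i : ι) : (power g i).isOver A ↔ g ∈ A := by
  simp [isOver, power, Atom.carrier]

variable [Group G] {k : ι → ℤ}

def lhs (E : ExpEq G ι) (k : ι → ℤ) : G := (E.atoms.map (Atom.eval k)).prod

theorem holds_iff_lhs_eq_one : E.holds k ↔ E.lhs k = 1 := Iff.rfl

@[simp] theorem lhs_mul : (E * F).lhs k = E.lhs k * F.lhs k := by
  simp [lhs, HMul.hMul, Mul.mul]

@[simp] theorem lhs_const (c : G) : (const c : ExpEq G ι).lhs k = c := by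
  simp [lhs, const, Atom.eval]

@[simp] theorem lhs_power (g : G) (i : ι) : (power g i).lhs k = g ^ k i := by
  simp [lhs, power, Atom.eval]

end ExpEq

def sysVars (S : List (ExpEq G ι)) : Set ι := {i | ∃ E ∈ S, i ∈ E.vars}

theorem vars_subset_sysVars {E : ExpEq G ι} {S : List (ExpEq G ι)} (hE : E ∈ S) :
    E.vars ⊆ sysVars S :=
  fun _ hi => ⟨E, hE, hi⟩

@[simp] theorem sysVars_append (S T : List (ExpEq G ι)) :
    sysVars (S ++ T) = sysVars S ∪ sysVars T := by
  ext i; simp [sysVars, or_and_right, exists_or]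

@[simp] theorem sysVars_singleton (E : ExpEq G ι) : sysVars [E] = E.vars := by
  ext i; simp [sysVars]

/-- On the solutions of `sys`, a function `P` is represented by `val`, an expression over `H ν`
in variables outside `sys`. Keeping `val` is what allows branches of subwords to be multiplied,
and one last equation `val * g ^ x_i = 1` to be added. -/
structure Branch (G ι : Type*) where
  sys : List (ExpEq G ι)
  val : ExpEq G ι

section Peripheral

variable [Group G] (H : Λ → Subgroup G)

def IsPeripheralSystem (S : List (ExpEq G ι)) : Prop :=
  S.Pairwise ExpEq.Indep ∧ ∀ E ∈ S, ∃ μ, E.isOver (H μ)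

def IsPeripheralDisjunction (V : Set ι) (C : (ι → ℤ) → Prop) : Prop :=
  ∃ Φ : List (List (ExpEq G ι)),
    (∀ S ∈ Φ, IsPeripheralSystem H S ∧ sysVars S ⊆ V) ∧ ∀ k, C k ↔ SatDisj Φ k

structure Branch.IsValid (ν : Λ) (V : Set ι) (P : (ι → ℤ) → G) (b : Branch G ι) : Prop where
  isPeripheralSystem : IsPeripheralSystem H b.sys
  val_isOver : b.val.isOver (H ν)
  sysVars_subset : sysVars b.sys ⊆ V
  vars_val_subset : b.val.vars ⊆ V
  disjoint : Disjoint (sysVars b.sys) b.val.vars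
  eq_lhs : ∀ k, (∀ E ∈ b.sys, E.holds k) → P k = b.val.lhs k

def HasBranches (ν : Λ) (V : Set ι) (C : (ι → ℤ) → Prop) (P : (ι → ℤ) → G) : Prop :=
  ∃ B : List (Branch G ι),
    (∀ b ∈ B, b.IsValid H ν V P) ∧ ∀ k, C k ↔ ∃ b ∈ B, ∀ E ∈ b.sys, E.holds k

variable {H} {V V' : Set ι} {C C' : (ι → ℤ) → Prop}

theorem IsPeripheralSystem.append {S T : List (ExpEq G ι)} (hS : IsPeripheralSystem H S)
    (hT : IsPeripheralSystem H T) (hST : Disjoint (sysVars S) (sysVars T)) :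
    IsPeripheralSystem H (S ++ T) := by
  refine ⟨List.pairwise_append.2 ⟨hS.1, hT.1, fun E hE F hF => ?_⟩, ?_⟩
  · exact hST.mono (vars_subset_sysVars hE) (vars_subset_sysVars hF)
  · exact fun E hE => (List.mem_append.1 hE).elim (hS.2 E) (hT.2 E)

theorem isPeripheralSystem_singleton {E : ExpEq G ι} {μ : Λ} (hE : E.isOver (H μ)) :
    IsPeripheralSystem H [E] :=
  ⟨List.pairwise_singleton _ _, fun _ hF => ⟨μ, List.mem_singleton.1 hF ▸ hE⟩⟩

theorem isPeripheralDisjunction_const (V : Set ι) (p : Prop) :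
    IsPeripheralDisjunction H V fun _ => p := by
  by_cases hp : p
  · exact ⟨[[]], by simp [IsPeripheralSystem, sysVars], by simp [SatDisj, hp]⟩
  · exact ⟨[], by simp, by simp [SatDisj, hp]⟩

theorem IsPeripheralDisjunction.congr (h : IsPeripheralDisjunction H V C) (hV : V ⊆ V')
    (hC : ∀ k, C k ↔ C' k) : IsPeripheralDisjunction H V' C' := by
  obtain ⟨Φ, hΦ, hiff⟩ := h
  exact ⟨Φ, fun S hS => ⟨(hΦ S hS).1, (hΦ S hS).2.trans hV⟩, fun k => (hC k).symm.trans (hiff k)⟩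

variable {ν : Λ} {P P' : (ι → ℤ) → G}

theorem HasBranches.congr (h : HasBranches H ν V C P) (hV : V ⊆ V') (hC : ∀ k, C k ↔ C' k)
    (hP : ∀ k, C k → P k = P' k) : HasBranches H ν V' C' P' := by
  obtain ⟨B, hB, hiff⟩ := h
  refine ⟨B, fun b hb => ?_, fun k => (hC k).symm.trans (hiff k)⟩
  obtain ⟨hper, hover, hsys, hval, hdisj, heq⟩ := hB b hb
  refine ⟨hper, hover, hsys.trans hV, hval.trans hV, hdisj, fun k hk => ?_⟩
  rw [← hP k ((hiff k).2 ⟨b, hb, hk⟩), heq k hk]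

theorem HasBranches.of_not (hC : ∀ k, ¬ C k) : HasBranches H ν V C P :=
  ⟨[], by simp, by simpa using hC⟩

theorem HasBranches.or (h : HasBranches H ν V C P) (h' : HasBranches H ν V C' P) :
    HasBranches H ν V (fun k => C k ∨ C' k) P := by
  obtain ⟨B, hB, hiff⟩ := h
  obtain ⟨B', hB', hiff'⟩ := h'
  refine ⟨B ++ B', by simpa [or_imp, forall_and] using ⟨hB, hB'⟩, fun k => ?_⟩
  simp only [hiff, hiff', List.mem_append, or_and_right, exists_or]

theorem HasBranches.exists {α : Type*} {C : α → (ι → ℤ) → Prop} :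
    ∀ I : List α, (∀ a ∈ I, HasBranches H ν V (C a) P) →
      HasBranches H ν V (fun k => ∃ a ∈ I, C a k) P
  | [], _ => .of_not (by simp)
  | a :: I, h => ((h a (by simp)).or (HasBranches.exists I fun b hb => h b (by simp [hb]))).congr
      subset_rfl (by simp) (fun _ _ => rfl)

theorem IsPeripheralDisjunction.hasBranches (h : IsPeripheralDisjunction H V C) {c : G}
    (hc : c ∈ H ν) : HasBranches H ν V C fun _ => c := by
  obtain ⟨Φ, hΦ, hiff⟩ := h
  refine ⟨Φ.map fun S => ⟨S, .const c⟩, ?_, fun k => by simp [hiff, SatDisj]⟩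
  simp only [List.mem_map, forall_exists_index, and_imp, forall_apply_eq_imp_iff₂]
  exact fun S hS => ⟨(hΦ S hS).1, by simpa using hc, (hΦ S hS).2, by simp, by simp, by simp⟩

theorem HasBranches.mul {V₁ V₂ : Set ι} {C₁ C₂ : (ι → ℤ) → Prop} {P₁ P₂ : (ι → ℤ) → G}
    (h₁ : HasBranches H ν V₁ C₁ P₁) (h₂ : HasBranches H ν V₂ C₂ P₂) {e : ExpEq G ι}
    (he : e.isOver (H ν)) (h₁₂ : Disjoint V₁ V₂) (h₁e : Disjoint V₁ e.vars)
    (he₂ : Disjoint e.vars V₂) :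
    HasBranches H ν (V₁ ∪ e.vars ∪ V₂) (fun k => C₁ k ∧ C₂ k)
      (fun k => P₁ k * e.lhs k * P₂ k) := by
  obtain ⟨B₁, hB₁, hiff₁⟩ := h₁
  obtain ⟨B₂, hB₂, hiff₂⟩ := h₂
  refine ⟨B₁.flatMap fun b₁ => B₂.map fun b₂ => ⟨b₁.sys ++ b₂.sys, b₁.val * e * b₂.val⟩,
    ?_, fun k => ?_⟩
  · simp only [List.mem_flatMap, List.mem_map, forall_exists_index, and_imp]
    rintro _ b₁ hb₁ b₂ hb₂ rfl
    obtain ⟨per₁, over₁, sys₁, val₁, disj₁, eq₁⟩ := hB₁ b₁ hb₁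
    obtain ⟨per₂, over₂, sys₂, val₂, disj₂, eq₂⟩ := hB₂ b₂ hb₂
    refine ⟨per₁.append per₂ (h₁₂.mono sys₁ sys₂), by simp [over₁, over₂, he], ?_, ?_, ?_, ?_⟩
    · simp only [sysVars_append]
      exact Set.union_subset (sys₁.trans (by grind)) (sys₂.trans (by grind))
    · simp only [ExpEq.vars_mul]
      exact Set.union_subset (Set.union_subset (val₁.trans (by grind)) (by grind))
        (val₂.trans (by grind))
    · simp only [sysVars_append, ExpEq.vars_mul, Set.disjoint_union_left,
        Set.disjoint_union_right]
      exact ⟨⟨⟨disj₁, h₁₂.symm.mono sys₂ val₁⟩, h₁e.mono_left sys₁, he₂.symm.mono_left sys₂⟩,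
        h₁₂.mono sys₁ val₂, disj₂⟩
    · intro k hk
      simp only [List.forall_mem_append] at hk
      simp [eq₁ k hk.1, eq₂ k hk.2]
  · simp only [hiff₁, hiff₂, List.mem_flatMap, List.mem_map]
    constructor
    · rintro ⟨⟨b₁, hb₁, hk₁⟩, ⟨b₂, hb₂, hk₂⟩⟩
      exact ⟨_, ⟨b₁, hb₁, b₂, hb₂, rfl⟩, List.forall_mem_append.2 ⟨hk₁, hk₂⟩⟩
    · rintro ⟨_, ⟨b₁, hb₁, b₂, hb₂, rfl⟩, hk⟩
      rw [List.forall_mem_append] at hk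
      exact ⟨⟨b₁, hb₁, hk.1⟩, ⟨b₂, hb₂, hk.2⟩⟩

theorem HasBranches.isPeripheralDisjunction_mul_power {μ : Λ} {Q : (ι → ℤ) → G}
    (h : HasBranches H μ V (fun k => Q k ∈ H μ) Q) {g : G} (hg : g ∈ H μ) {i : ι}
    (hi : i ∉ V) : IsPeripheralDisjunction H (insert i V) fun k => Q k * g ^ k i = 1 := by
  obtain ⟨B, hB, hiff⟩ := h
  refine ⟨B.map fun b => b.sys ++ [b.val * .power g i], ?_, fun k => ?_⟩
  · simp only [List.mem_map, forall_exists_index, and_imp, forall_apply_eq_imp_iff₂]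
    intro b hb
    obtain ⟨per, hover, sys, val, disj, -⟩ := hB b hb
    refine ⟨per.append (isPeripheralSystem_singleton (μ := μ) (by simp [hover, hg])) ?_, ?_⟩
    · simp only [sysVars_singleton, ExpEq.vars_mul, ExpEq.vars_power,
        Set.disjoint_union_right, Set.disjoint_singleton_right]
      exact ⟨disj, fun hi' => hi (sys hi')⟩
    · simp only [sysVars_append, sysVars_singleton, ExpEq.vars_mul, ExpEq.vars_power]
      exact Set.union_subset (sys.trans (Set.subset_insert _ _))
        (Set.union_subset (val.trans (Set.subset_insert _ _)) (by simp))
  · simp only [SatDisj, List.mem_map]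
    constructor
    · intro hk
      have hQ : Q k ∈ H μ := by
        rw [eq_inv_of_mul_eq_one_left hk]; exact inv_mem (zpow_mem hg _)
      obtain ⟨b, hb, hsys⟩ := (hiff k).1 hQ
      refine ⟨_, ⟨b, hb, rfl⟩, List.forall_mem_append.2 ⟨hsys, ?_⟩⟩
      simpa [ExpEq.holds_iff_lhs_eq_one, ← (hB b hb).eq_lhs k hsys] using hk
    · rintro ⟨_, ⟨b, hb, rfl⟩, hsys⟩
      rw [List.forall_mem_append] at hsys
      simpa [ExpEq.holds_iff_lhs_eq_one, ← (hB b hb).eq_lhs k hsys.1] using hsys.2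

end Peripheral

section Words

variable [Group G] {X : Set G} {H : Λ → Subgroup G}

theorem mul_mul_eq_iff_mul_inv_mul_mul_eq_one (a x b c : G) :
    a * x * b = c ↔ b * c⁻¹ * a * x = 1 := by
  rw [← mul_inv_eq_one, mul_assoc, mul_eq_one_comm]
  simp only [mul_assoc]

theorem exists_letters_prod_eq (hXsym : X = X⁻¹)
    (hgen : Subgroup.closure (X ∪ ⋃ μ, (H μ : Set G)) = ⊤) (x : G) :
    ∃ u : List (RelLetter G X H), (u.map RelLetter.val).prod = x := by
  have hinv : (X ∪ ⋃ μ, (H μ : Set G))⁻¹ = X ∪ ⋃ μ, (H μ : Set G) := by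
    simp [Set.union_inv, Set.iUnion_inv, ← hXsym]
  have hx : x ∈ Submonoid.closure (X ∪ ⋃ μ, (H μ : Set G)) := by
    rw [← Set.union_self (X ∪ _), ← congrArg ((X ∪ ⋃ μ, (H μ : Set G)) ∪ ·) hinv,
      ← Subgroup.closure_toSubmonoid, hgen]
    trivial
  induction hx using Submonoid.closure_induction with
  | mem y hy =>
    rcases hy with hy | hy
    · exact ⟨[.ofX y hy], by simp [RelLetter.val]⟩
    · obtain ⟨μ, hy⟩ := Set.mem_iUnion.1 hy
      exact ⟨[.ofH μ y hy], by simp [RelLetter.val]⟩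
  | one => exact ⟨[], rfl⟩
  | mul y z _ _ hy hz =>
    obtain ⟨u, rfl⟩ := hy
    obtain ⟨v, rfl⟩ := hz
    exact ⟨u ++ v, by simp⟩

/-- `power μ g _ i` stands for `g ^ x_i`; for given exponents it is a letter of `H μ`
(`Item.toLetter`). -/
inductive Item (X : Set G) (H : Λ → Subgroup G) (ι : Type*)
  | letter (l : RelLetter G X H)
  | power (μ : Λ) (g : G) (hg : g ∈ H μ) (i : ι)

namespace Item

def val (k : ι → ℤ) : Item X H ι → G
  | letter l => l.val
  | power _ g _ i => g ^ k i

def tag : Item X H ι → Option Λ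
  | letter l => l.lamOf
  | power μ _ _ _ => some μ

def var : Item X H ι → Option ι
  | letter _ => none
  | power _ _ _ i => some i

def toExpEq : Item X H ι → ExpEq G ι
  | letter l => .const l.val
  | power _ g _ i => .power g i

def toLetter (k : ι → ℤ) : Item X H ι → RelLetter G X H
  | letter l => l
  | power μ g hg i => .ofH μ (g ^ k i) (zpow_mem hg _)

variable (k : ι → ℤ) (x : Item X H ι)

@[simp] theorem val_toLetter : (x.toLetter k).val = x.val k := by
  cases x <;> rfl

@[simp] theorem lamOf_toLetter : (x.toLetter k).lamOf = x.tag := by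
  cases x <;> rfl

@[simp] theorem lhs_toExpEq : x.toExpEq.lhs k = x.val k := by
  cases x <;> simp [toExpEq, val]

variable {x} {ν : Λ}

theorem val_mem (h : x.tag = some ν) : x.val k ∈ H ν := by
  rw [← val_toLetter]
  cases hx : x.toLetter k with
  | ofX => simp [← lamOf_toLetter k, hx, RelLetter.lamOf] at h
  | ofH μ g hg =>
    rw [← lamOf_toLetter k, hx] at h
    cases h
    exact hg

theorem isOver_toExpEq (h : x.tag = some ν) : x.toExpEq.isOver (H ν) := by
  cases x with
  | letter l => simpa [toExpEq, val] using val_mem 0 h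
  | power μ g hg i =>
    cases h
    simpa [toExpEq] using hg

end Item

open Item

def evalWord (k : ι → ℤ) (w : List (Item X H ι)) : G := (w.map (Item.val k)).prod

def wordVarList (w : List (Item X H ι)) : List ι := w.filterMap Item.var

def wordVars (w : List (Item X H ι)) : Set ι := {i | i ∈ wordVarList w}

variable {k : ι → ℤ} {w u v : List (Item X H ι)}

@[simp] theorem evalWord_append : evalWord k (u ++ v) = evalWord k u * evalWord k v := by
  simp [evalWord]

@[simp] theorem evalWord_cons (x : Item X H ι) :
    evalWord k (x :: w) = x.val k * evalWord k w := by
  simp [evalWord]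

@[simp] theorem evalWord_singleton (x : Item X H ι) : evalWord k [x] = x.val k := by
  simp [evalWord]

@[simp] theorem evalWord_map_letter (l : List (RelLetter G X H)) :
    evalWord k (l.map Item.letter : List (Item X H ι)) = (l.map RelLetter.val).prod := by
  simp [evalWord, Function.comp_def, Item.val]

theorem mem_wordVars {i : ι} : i ∈ wordVars w ↔ i ∈ wordVarList w := Iff.rfl

@[simp] theorem wordVarList_append : wordVarList (u ++ v) = wordVarList u ++ wordVarList v :=
  List.filterMap_append

@[simp] theorem wordVars_append : wordVars (u ++ v) = wordVars u ∪ wordVars v := by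
  ext i; simp [wordVars]

@[simp] theorem wordVarList_map_letter (l : List (RelLetter G X H)) :
    wordVarList (l.map Item.letter : List (Item X H ι)) = [] := by
  simp [wordVarList, Item.var]

theorem vars_toExpEq (x : Item X H ι) : x.toExpEq.vars = wordVars [x] := by
  cases x <;> simp [toExpEq, wordVars, wordVarList, Item.var]

theorem disjoint_wordVars_of_nodup (h : (wordVarList u ++ wordVarList v).Nodup) :
    Disjoint (wordVars u) (wordVars v) := by
  rw [List.nodup_append] at h
  exact Set.disjoint_left.2 fun i hu hv => h.2.2 i hu i hv rfl

theorem evalWord_eq_of_wordVarList_eq_nil (h : wordVarList w = []) (k k' : ι → ℤ) :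
    evalWord k w = evalWord k' w := by
  induction w with
  | nil => rfl
  | cons x w ih =>
    cases x with
    | letter l => simp_all [evalWord, wordVarList, Item.var, Item.val]
    | power => simp [wordVarList, Item.var] at h

theorem exists_eq_append_power_cons {i : ι} (hi : i ∈ wordVarList w) :
    ∃ p μ g hg s, w = p ++ Item.power (X := X) μ g hg i :: s := by
  obtain ⟨x, hx, hxi⟩ := List.mem_filterMap.1 hi
  obtain ⟨p, s, rfl⟩ := List.append_of_mem hx
  cases x with
  | letter => simp [Item.var] at hxi
  | power μ g hg j =>
    cases hxi
    exact ⟨p, μ, g, hg, s, rfl⟩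

theorem take_append_getElem_append_drop {α : Type*} (l : List α) (j : Fin l.length) :
    l.take j ++ [l[j]] ++ l.drop (j + 1) = l := by
  rw [List.append_assoc, List.singleton_append, Fin.getElem_fin, List.getElem_cons_drop,
    List.take_append_drop]

theorem evalWord_eq_take_mul_val_mul_drop (k : ι → ℤ) (w : List (Item X H ι))
    (j : Fin w.length) :
    evalWord k w = evalWord k (w.take j) * w[j].val k * evalWord k (w.drop (j + 1)) := by
  have h := congrArg (evalWord k) (take_append_getElem_append_drop w j)
  rw [evalWord_append, evalWord_append, evalWord_singleton] at h
  exact h.symm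

theorem relMetric_evalWord_le_length (k : ι → ℤ) (w : List (Item X H ι)) (ν : Λ)
    (h : ∀ j : Fin w.length, w[j].tag = some ν → evalWord k (w.take j) ∉ H ν) :
    relMetric X H ν 1 (evalWord k w) ≤ w.length := by
  refine sInf_le ⟨w.map (Item.toLetter k), ?_, fun j ⟨hlam, hmem⟩ => ?_, by simp⟩
  · simp [evalWord, Function.comp_def]
  · have hj : (j : ℕ) < w.length := by simpa using j.2
    refine h ⟨j, hj⟩ (by simpa using hlam) ?_
    simpa [pathVertex, evalWord, ← List.map_take, Function.comp_def] using hmem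

theorem evalWord_mem_iff (k : ι → ℤ) (w : List (Item X H ι)) (ν : Λ) :
    evalWord k w ∈ H ν ↔
      (∃ j ∈ List.finRange w.length, w[j].tag = some ν ∧
        evalWord k (w.take j) ∈ H ν ∧ evalWord k (w.drop (j + 1)) ∈ H ν) ∨
      evalWord k w ∈ {h | h ∈ H ν ∧ relMetric X H ν 1 h ≤ w.length} := by
  constructor
  · intro hw
    by_cases hentry : ∃ j : Fin w.length, w[j].tag = some ν ∧ evalWord k (w.take j) ∈ H ν
    · obtain ⟨j, htag, hp⟩ := hentry
      refine .inl ⟨j, List.mem_finRange j, htag, hp, ?_⟩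
      have hs : evalWord k (w.drop (j + 1)) =
          (evalWord k (w.take j) * w[j].val k)⁻¹ * evalWord k w := by
        rw [evalWord_eq_take_mul_val_mul_drop k w j]; group
      rw [hs]
      exact mul_mem (inv_mem (mul_mem hp (val_mem k htag))) hw
    · push Not at hentry
      exact .inr ⟨hw, relMetric_evalWord_le_length k w ν hentry⟩
  · rintro (⟨j, -, htag, hp, hs⟩ | ⟨hw, -⟩)
    · rw [evalWord_eq_take_mul_val_mul_drop k w j]
      exact mul_mem (mul_mem hp (val_mem k htag)) hs
    · exact hw

theorem hasBranches_entry (hw : (wordVarList w).Nodup) {ν : Λ} (j : Fin w.length)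
    (hpre : HasBranches H ν (wordVars (w.take j)) (fun k => evalWord k (w.take j) ∈ H ν)
      (evalWord · (w.take j)))
    (hsuf : HasBranches H ν (wordVars (w.drop (j + 1)))
      (fun k => evalWord k (w.drop (j + 1)) ∈ H ν) (evalWord · (w.drop (j + 1)))) :
    HasBranches H ν (wordVars w) (fun k => w[j].tag = some ν ∧ evalWord k (w.take j) ∈ H ν ∧
      evalWord k (w.drop (j + 1)) ∈ H ν) (evalWord · w) := by
  by_cases htag : w[j].tag = some ν
  · have hsplit := take_append_getElem_append_drop w j
    rw [← hsplit, wordVarList_append, wordVarList_append] at hw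
    refine (hpre.mul hsuf (isOver_toExpEq htag) ?_ ?_ ?_).congr ?_ ?_ ?_
    · exact disjoint_wordVars_of_nodup
        (hw.sublist ((List.sublist_append_left _ _).append (List.Sublist.refl _)))
    · rw [vars_toExpEq]
      exact disjoint_wordVars_of_nodup (hw.sublist (List.sublist_append_left _ _))
    · rw [vars_toExpEq]
      exact disjoint_wordVars_of_nodup
        (hw.sublist ((List.sublist_append_right _ _).append (List.Sublist.refl _)))
    · rw [vars_toExpEq, ← wordVars_append, ← wordVars_append, hsplit]
    · exact fun k => ⟨fun h => ⟨htag, h⟩, fun h => h.2⟩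
    · intro k _
      simp [evalWord_eq_take_mul_val_mul_drop k w j]
  · exact .of_not fun k hk => htag hk.1

theorem isPeripheralDisjunction_evalWord_eq_of_hasBranches (hXsym : X = X⁻¹)
    (hgen : Subgroup.closure (X ∪ ⋃ μ, (H μ : Set G)) = ⊤) (hw : (wordVarList w).Nodup)
    (c : G)
    (ih : ∀ w' : List (Item X H ι), (wordVarList w').Nodup →
      (wordVarList w').length < (wordVarList w).length → ∀ μ,
        HasBranches H μ (wordVars w') (fun k => evalWord k w' ∈ H μ) (evalWord · w')) :
    IsPeripheralDisjunction H (wordVars w) fun k => evalWord k w = c := by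
  by_cases hV : wordVarList w = []
  · exact (isPeripheralDisjunction_const _ (evalWord 0 w = c)).congr subset_rfl fun k => by
      rw [evalWord_eq_of_wordVarList_eq_nil hV k 0]
  obtain ⟨i, hi⟩ := List.exists_mem_of_ne_nil _ hV
  obtain ⟨p, μ, g, hg, s, rfl⟩ := exists_eq_append_power_cons hi
  obtain ⟨u, hu⟩ := exists_letters_prod_eq hXsym hgen c⁻¹
  set w' : List (Item X H ι) := s ++ u.map Item.letter ++ p
  have hvars : wordVarList (p ++ power μ g hg i :: s) = wordVarList p ++ i :: wordVarList s := by
    simp [wordVarList, Item.var]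
  have hvars' : wordVarList w' = wordVarList s ++ wordVarList p := by simp [w']
  rw [hvars, List.nodup_middle, List.nodup_cons] at hw
  have hw' : (wordVarList w').Nodup := by rw [hvars']; exact List.nodup_append_comm.1 hw.2
  have hi' : i ∉ wordVars w' := by simpa [wordVars, hvars', or_comm] using hw.1
  have hlt : (wordVarList w').length < (wordVarList (p ++ power μ g hg i :: s)).length := by
    simp [hvars, hvars']; omega
  refine ((ih w' hw' hlt μ).isPeripheralDisjunction_mul_power hg hi').congr ?_ fun k => ?_
  · intro j hj
    simp only [Set.mem_insert_iff, mem_wordVars, hvars', hvars, List.mem_append,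
      List.mem_cons] at hj ⊢
    tauto
  · have hw'k : evalWord k w' = evalWord k s * c⁻¹ * evalWord k p := by
      simp [w', hu, mul_assoc]
    rw [hw'k, ← mul_mul_eq_iff_mul_inv_mul_mul_eq_one]
    simp [Item.val, mul_assoc]

theorem hasBranches_evalWord_mem (hXsym : X = X⁻¹) (hemb : IsHypEmbedded X H)
    (w : List (Item X H ι)) (hw : (wordVarList w).Nodup) (ν : Λ) :
    HasBranches H ν (wordVars w) (fun k => evalWord k w ∈ H ν) (evalWord · w) := by
  have hentry : ∀ j ∈ List.finRange w.length, HasBranches H ν (wordVars w)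
      (fun k => w[j].tag = some ν ∧ evalWord k (w.take j) ∈ H ν ∧
        evalWord k (w.drop (j + 1)) ∈ H ν) (evalWord · w) := fun j _ =>
    hasBranches_entry hw j
      (hasBranches_evalWord_mem hXsym hemb (w.take j)
        (hw.sublist ((List.take_sublist _ _).filterMap _)) ν)
      (hasBranches_evalWord_mem hXsym hemb (w.drop (j + 1))
        (hw.sublist ((List.drop_sublist _ _).filterMap _)) ν)
  have hfin := hemb.2.2 ν w.length
  have hball : ∀ c ∈ hfin.toFinset.toList,
      HasBranches H ν (wordVars w) (fun k => evalWord k w = c) (evalWord · w) := by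
    intro c hc
    rw [Finset.mem_toList, Set.Finite.mem_toFinset] at hc
    exact ((isPeripheralDisjunction_evalWord_eq_of_hasBranches hXsym hemb.1 hw c
      fun w' hw' hlt μ => hasBranches_evalWord_mem hXsym hemb w' hw' μ).hasBranches hc.1).congr
        subset_rfl (fun _ => Iff.rfl) fun _ hk => hk.symm
  refine ((HasBranches.exists _ hentry).or (HasBranches.exists _ hball)).congr subset_rfl
    (fun k => ?_) fun _ _ => rfl
  rw [evalWord_mem_iff k w ν]
  simp
termination_by ((wordVarList w).length, w.length)
decreasing_by
  · exact Prod.Lex.right' _ ((List.take_sublist _ _).filterMap _).length_le (by simp)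
  · exact Prod.Lex.right' _ ((List.drop_sublist _ _).filterMap _).length_le
      (by simp only [List.length_drop]; omega)
  · exact Prod.Lex.left _ _ hlt

theorem isPeripheralDisjunction_evalWord_eq (hXsym : X = X⁻¹) (hemb : IsHypEmbedded X H)
    (hw : (wordVarList w).Nodup) (c : G) :
    IsPeripheralDisjunction H (wordVars w) fun k => evalWord k w = c :=
  isPeripheralDisjunction_evalWord_eq_of_hasBranches hXsym hemb.1 hw c
    fun w' hw' _ μ => hasBranches_evalWord_mem hXsym hemb w' hw' μ

section StdWord

variable {n : ℕ} (u : Fin n → List (RelLetter G X H)) {g : Fin n → G} {lam : Fin n → Λ}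
  (hg : ∀ i, g i ∈ H (lam i))

def stdWord : List (Item X H (Fin n)) :=
  (List.ofFn fun i => (u i).map Item.letter ++ [Item.power (lam i) (g i) (hg i) i]).flatten

theorem evalWord_stdWord (k : Fin n → ℤ) :
    evalWord k (stdWord u hg) =
      (List.ofFn fun i => ((u i).map RelLetter.val).prod * g i ^ k i).prod := by
  simp [stdWord, evalWord, List.map_flatten, List.prod_flatten, Function.comp_def, Item.val]

theorem wordVarList_stdWord : wordVarList (stdWord u hg) = List.finRange n := by
  simp only [stdWord, wordVarList, List.filterMap_flatten, List.map_ofFn, Function.comp_def,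
    List.filterMap_append, List.filterMap_map, Item.var, List.filterMap_none, List.filterMap_cons,
    List.filterMap_nil, List.nil_append]
  rw [List.ofFn_eq_map, ← List.flatMap_def, List.flatMap_singleton']

end StdWord

end Words

end ExpPaper

theorem proposition_peripheral_equation_general
    {G Λ : Type*} [Group G] (X : Set G) (H : Λ → Subgroup G)
    (hXsym : X = X⁻¹) (hemb : IsHypEmbedded X H)
    (n : ℕ) (a g : Fin n → G) (lam : Fin n → Λ)
    (hg : ∀ i, g i ∈ H (lam i)) :
    ∃ Φ : List (List (ExpEq G (Fin n))),
      (∀ sys ∈ Φ, sys.Pairwise ExpEq.Indep) ∧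
      (∀ sys ∈ Φ, ∀ E ∈ sys, ∃ mu : Λ, E.isOver (H mu : Set G)) ∧
      ∀ k : Fin n → ℤ, k ∈ stdSolZ a g ↔ SatDisj Φ k := by
  choose u hu using fun i => exists_letters_prod_eq hXsym hemb.1 (a i)
  have hw : (wordVarList (stdWord u hg)).Nodup := by
    rw [wordVarList_stdWord]
    exact List.nodup_finRange n
  obtain ⟨Φ, hΦ, hiff⟩ := isPeripheralDisjunction_evalWord_eq hXsym hemb hw 1
  refine ⟨Φ, fun S hS => (hΦ S hS).1.1, fun S hS => (hΦ S hS).1.2, fun k => ?_⟩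
  rw [← hiff k]
  simp [stdSolZ, evalWord_stdWord, hu]

/-- **Proposition (peripheral equations).** Suppose `{H_λ}` is hyperbolically
embedded in `G` with respect to a symmetric relative generating set `X ∋ 1`. Any
exponential equation with arbitrary coefficients `a i ∈ G` and `g i ∈ H (lam i)` is
equivalent to a finite disjunction of finite systems of pairwise independent
exponential equations, each of which is over `H_λ` for some `λ ∈ Λ`. -/
theorem proposition_peripheral_equation
    {G Λ : Type*} [Group G] (X : Set G) (H : Λ → Subgroup G)
    (hXsym : X = X⁻¹) (hX1 : (1 : G) ∈ X) (hemb : IsHypEmbedded X H)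
    (n : ℕ) (a g : Fin n → G) (lam : Fin n → Λ)
    (hg : ∀ i, g i ∈ H (lam i)) :
    ∃ Φ : List (List (ExpEq G (Fin n))),
      (∀ sys ∈ Φ, sys.Pairwise ExpEq.Indep) ∧
      (∀ sys ∈ Φ, ∀ E ∈ sys, ∃ mu : Λ, E.isOver (H mu : Set G)) ∧
      ∀ k : Fin n → ℤ, k ∈ stdSolZ a g ↔ SatDisj Φ k :=
  proposition_peripheral_equation_general X H hXsym hemb n a g lam hg
end

section
/- Let G be a virtually cyclic group. Then the solution set of any exponential equation a_1 g_1^{x_1} a_2 g_2^{x_2} ... a_n g_n^{x_n} = 1 with coefficients a_1, ..., a_n, g_1, ..., g_n ∈ G is a ℤ-semilinear subset of ℤ^n. -/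
/-! Let `⟨c⟩` be a normal cyclic subgroup of finite index `m`, e.g. the normal core of the given
cyclic subgroup. Every `g ^ m` is a power of `c` and conjugation maps `c` to a power of itself,
so after splitting each exponent as `x = m z + r` with `0 ≤ r < m`, the left-hand side becomes
`w_r * c ^ ℓ_r(z)` with `ℓ_r` linear. For fixed `r` the solutions `z` form a fibre of
`z ↦ c ^ ℓ_r(z)`, which is empty or a coset of a subgroup of `ℤ^n`, hence `ℤ`-linear. -/

namespace ExpPaper

open Set Subgroup

section Semilinear

variable {ι : Type*}

theorem isZSemilinear_iff_exists_finite {S : Set (ι → ℤ)} :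
    IsZSemilinear S ↔ ∃ T : Set (Set (ι → ℤ)), T.Finite ∧ (∀ s ∈ T, IsZLinear s) ∧ S = ⋃₀ T := by
  constructor
  · rintro ⟨m, f, hf, rfl⟩
    exact ⟨range f, finite_range f, forall_mem_range.2 hf, (sUnion_range f).symm⟩
  · rintro ⟨T, hT, hlin, rfl⟩
    obtain ⟨m, f, -, rfl⟩ := hT.fin_param
    exact ⟨m, f, forall_mem_range.1 hlin, sUnion_range f⟩

theorem isZSemilinear_empty : IsZSemilinear (∅ : Set (ι → ℤ)) :=
  isZSemilinear_iff_exists_finite.2 ⟨∅, finite_empty, by simp, sUnion_empty.symm⟩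

theorem IsZLinear.isZSemilinear {S : Set (ι → ℤ)} (h : IsZLinear S) : IsZSemilinear S :=
  isZSemilinear_iff_exists_finite.2 ⟨{S}, finite_singleton S, by simpa, sUnion_singleton S |>.symm⟩

theorem IsZSemilinear.iUnion {κ : Type*} [Finite κ] {S : κ → Set (ι → ℤ)}
    (h : ∀ j, IsZSemilinear (S j)) : IsZSemilinear (⋃ j, S j) := by
  choose T hT hlin hS using fun j => isZSemilinear_iff_exists_finite.1 (h j)
  refine isZSemilinear_iff_exists_finite.2 ⟨⋃ j, T j, finite_iUnion hT, ?_, ?_⟩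
  · simp only [mem_iUnion, forall_exists_index]
    exact fun s j hs => hlin j s hs
  · rw [sUnion_iUnion]
    exact iUnion_congr hS

theorem IsZLinear.image_smul_add [Fintype ι] {S : Set (ι → ℤ)} (h : IsZLinear S)
    (k : ℤ) (b : ι → ℤ) : IsZLinear ((fun x => k • x + b) '' S) := by
  obtain ⟨d, A, b₀, rfl⟩ := h
  refine ⟨d, k • A, k • b₀ + b, ?_⟩
  rw [← range_comp]
  congr 1
  funext z
  simp only [Function.comp_apply, Matrix.smul_mulVec, smul_add, add_assoc]

theorem IsZSemilinear.image_smul_add [Fintype ι] {S : Set (ι → ℤ)} (h : IsZSemilinear S)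
    (k : ℤ) (b : ι → ℤ) : IsZSemilinear ((fun x => k • x + b) '' S) := by
  obtain ⟨m, f, hf, rfl⟩ := h
  rw [image_iUnion]
  exact IsZSemilinear.iUnion fun j => ((hf j).image_smul_add k b).isZSemilinear

theorem isZLinear_setOf_sub_mem [Finite ι] (H : Submodule ℤ (ι → ℤ)) (b : ι → ℤ) :
    IsZLinear {x | x - b ∈ H} := by
  have := Fintype.ofFinite ι
  obtain ⟨d, s, hs⟩ := Submodule.fg_iff_exists_fin_generating_family.1 (IsNoetherian.noetherian H)
  let A : Matrix ι (Fin d) ℤ := Matrix.of fun i j => s j i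
  have hA : LinearMap.range A.mulVecLin = H := by
    rw [Matrix.range_mulVecLin]
    exact hs
  refine ⟨d, A, b, ?_⟩
  ext x
  simp only [mem_ofPred_eq, mem_range, ← hA, LinearMap.mem_range, Matrix.mulVecLin_apply,
    eq_sub_iff_add_eq]

theorem isZSemilinear_setOf_zpow_eq {G : Type*} [Group G] [Finite ι]
    (c w : G) (ℓ : (ι → ℤ) →+ ℤ) : IsZSemilinear {z | c ^ ℓ z = w} := by
  rcases eq_empty_or_nonempty {z | c ^ ℓ z = w} with hempty | ⟨z₀, hz₀⟩
  · rw [hempty]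
    exact isZSemilinear_empty
  convert (isZLinear_setOf_sub_mem
    (Submodule.comap ℓ.toIntLinearMap (Ideal.span {(orderOf c : ℤ)})) z₀).isZSemilinear using 1
  ext z
  rw [mem_ofPred_eq] at hz₀
  simp only [mem_ofPred_eq, Submodule.mem_comap, AddMonoidHom.coe_toIntLinearMap,
    Ideal.mem_span_singleton, map_sub, ← Int.modEq_iff_dvd, ← zpow_eq_zpow_iff_modEq, hz₀]
  exact eq_comm

theorem iUnion_range_smul_add_eq_univ {m : ℕ} (hm : 0 < m) :
    ⋃ r : ι → Fin m, range (fun z : ι → ℤ => (m : ℤ) • z + fun i => (r i : ℤ)) = univ := by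
  have hm' : (0 : ℤ) < m := by exact_mod_cast hm
  refine eq_univ_of_forall fun x => mem_iUnion.2 ⟨fun i => ⟨(x i % m).toNat, ?_⟩, ?_⟩
  · have := Int.emod_lt_of_pos (x i) hm'
    omega
  · refine ⟨fun i => x i / m, funext fun i => ?_⟩
    have := Int.emod_nonneg (x i) hm'.ne'
    have := Int.mul_ediv_add_emod (x i) m
    simp only [Pi.add_apply, Pi.smul_apply, smul_eq_mul]
    omega

end Semilinear

section Group

variable {G : Type*} [Group G]

theorem IsVirtuallyCyclic.exists_zpowers_normal_finiteIndex (h : IsVirtuallyCyclic G) :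
    ∃ c : G, (zpowers c).Normal ∧ (zpowers c).FiniteIndex := by
  obtain ⟨C, hC, hindex⟩ := h
  have : C.FiniteIndex := ⟨hindex⟩
  have : IsCyclic C.normalCore := isCyclic_of_le C.normalCore_le
  obtain ⟨c, hc⟩ := C.normalCore.isCyclic_iff_exists_zpowers_eq_top.1 this
  exact ⟨c, hc ▸ C.normalCore_normal, hc ▸ inferInstance⟩

theorem exists_zpow_mul_eq_mul_zpow {c : G} [(zpowers c).Normal] (w : G) :
    ∃ s : ℤ, ∀ t : ℤ, c ^ t * w = w * c ^ (s * t) := by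
  obtain ⟨s, hs⟩ := mem_zpowers_iff.1 (Normal.conj_mem' inferInstance c (mem_zpowers c) w)
  refine ⟨s, fun t => ?_⟩
  have := conj_zpow (a := w⁻¹) (b := c) (i := t)
  rw [inv_inv] at this
  rw [zpow_mul, hs, this]
  group

theorem exists_prod_ofFn_mul_zpow_eq {M : Type*} [AddCommGroup M] {c : G} [(zpowers c).Normal]
    {n : ℕ} (h : Fin n → G) (ℓ : Fin n → M →+ ℤ) :
    ∃ (w : G) (ℓ' : M →+ ℤ), ∀ z, (List.ofFn fun i => h i * c ^ ℓ i z).prod = w * c ^ ℓ' z := by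
  induction n with
  | zero => exact ⟨1, 0, fun z => by simp⟩
  | succ n ih =>
    obtain ⟨w, ℓ', hw⟩ := ih (fun i => h i.succ) (fun i => ℓ i.succ)
    obtain ⟨s, hs⟩ := exists_zpow_mul_eq_mul_zpow (c := c) w
    refine ⟨h 0 * w, s • ℓ 0 + ℓ', fun z => ?_⟩
    rw [List.ofFn_succ, List.prod_cons, hw, AddMonoidHom.add_apply, AddMonoidHom.smul_apply,
      smul_eq_mul, zpow_add, mul_assoc, ← mul_assoc (c ^ _), hs]
    group

theorem exists_preimage_stdSolZ_eq {c : G} [(zpowers c).Normal] {n m : ℕ} (a g : Fin n → G)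
    {e : Fin n → ℤ} (he : ∀ i, c ^ e i = g i ^ m) (r : Fin n → ℤ) :
    ∃ (w : G) (ℓ : (Fin n → ℤ) →+ ℤ),
      (fun z => (m : ℤ) • z + r) ⁻¹' stdSolZ a g = {z | c ^ ℓ z = w} := by
  obtain ⟨w, ℓ, hw⟩ := exists_prod_ofFn_mul_zpow_eq (c := c) (fun i => a i * g i ^ r i)
    (fun i => e i • Pi.evalAddMonoidHom (fun _ => ℤ) i)
  refine ⟨w⁻¹, ℓ, ext fun z => ?_⟩
  have hpow : ∀ i, g i ^ ((m : ℤ) * z i + r i) = g i ^ r i * c ^ (e i * z i) := fun i => by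
    rw [add_comm, zpow_add, zpow_mul, zpow_natCast, ← he, ← zpow_mul]
  simp only [AddMonoidHom.smul_apply, Pi.evalAddMonoidHom_apply, smul_eq_mul] at hw
  simp only [mem_preimage, stdSolZ, mem_ofPred_eq, Pi.add_apply, Pi.smul_apply, smul_eq_mul,
    hpow, ← mul_assoc, hw, mul_eq_one_iff_eq_inv']

end Group

end ExpPaper

open ExpPaper

/-- **Lemma.** The solution set of an exponential equation over a virtually cyclic
group is a `ℤ`-semilinear subset of `ℤ^n`. -/
theorem virtually_cyclic_solution_set_zsemilinear
    {G : Type*} [Group G] (hvc : IsVirtuallyCyclic G)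
    (n : ℕ) (a g : Fin n → G) :
    IsZSemilinear (stdSolZ a g) := by
  obtain ⟨c, hnormal, hfinite⟩ := hvc.exists_zpowers_normal_finiteIndex
  choose e he using fun i =>
    Subgroup.mem_zpowers_iff.1 ((Subgroup.zpowers c).pow_index_mem (g i))
  rw [← Set.inter_univ (stdSolZ a g), Set.inter_comm, ← iUnion_range_smul_add_eq_univ
    (Nat.pos_of_ne_zero hfinite.index_ne_zero), Set.iUnion_inter]
  refine IsZSemilinear.iUnion fun r => ?_
  rw [← Set.image_preimage_eq_range_inter]
  obtain ⟨w, ℓ, hpreimage⟩ := exists_preimage_stdSolZ_eq a g he fun i => (r i : ℤ)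
  rw [hpreimage]
  exact (isZSemilinear_setOf_zpow_eq c w ℓ).image_smul_add _ _
end
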